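/- For an n×n Laplace-like matrix L with n ≥ 2, C(0) = 0 and T(0) = 0, where T(L) = Σ_τ A_τ(L); moreover if the identity (-1)^{n+1} T = C holds as functions on the (n-1)×(n-1) Laplace-like matrices, and the directional derivative identities v_{ij}(T(L)) = T(L') and v_{ij}(C(L)) = −C(L') hold for all i<j and all Laplace-like L, then (-1)^{n+1} T = C on n×n Laplace-like matrices. -/

import Mathlib

open scoped Classical

/-- The (i,j) cofactor of a square matrix. -/
noncomputable def cofactor {n : ℕ} (L : Matrix (Fin (n + 1)) (Fin (n + 1)) ℝ)
    (i j : Fin (n + 1)) : ℝ :=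
  (-1 : ℝ) ^ ((i : ℕ) + (j : ℕ)) * (L.submatrix i.succAbove j.succAbove).det

/-- The amplitude `A_τ(L)`. -/
noncomputable def amplitude {n : ℕ} (τ : SimpleGraph (Fin n))
    (L : Matrix (Fin n) (Fin n) ℝ) : ℝ :=
  ∏ p ∈ Finset.univ.filter (fun p : Fin n × Fin n => p.1 < p.2 ∧ τ.Adj p.1 p.2), L p.1 p.2

/-- The tree sum `T(L) = Σ_τ A_τ(L)`. -/
noncomputable def treeSum {n : ℕ} (L : Matrix (Fin n) (Fin n) ℝ) : ℝ :=
  ∑ τ ∈ Finset.univ.filter (fun τ : SimpleGraph (Fin n) => τ.IsTree), amplitude τ L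

/-- The tangent vector `E_{ij}`. -/
def tangentE {n : ℕ} (i j : Fin n) : Matrix (Fin n) (Fin n) ℝ :=
  Matrix.of fun a b =>
    (if a = i ∧ b = j then (1 : ℝ) else 0) + (if a = j ∧ b = i then 1 else 0) -
      (if a = i ∧ b = i then 1 else 0) - (if a = j ∧ b = j then 1 else 0)

/-- `L₊`: add row `j` to row `i` and column `j` to column `i`. -/
def addRowCol {n : ℕ} (L : Matrix (Fin n) (Fin n) ℝ) (i j : Fin n) :
    Matrix (Fin n) (Fin n) ℝ :=
  Matrix.of fun a b =>
    L a b + (if a = i then L j b else 0) +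
      (if b = i then L a j + (if a = i then L j j else 0) else 0)

/-!
Put `F = (-1)^(n+1) T - C`; it vanishes at `0`. At a Laplace-like `L` the derivative identities
give `v_ij F = (-1)^(n+1) T(L') + C(L')`, which is `0` by the induction hypothesis because the
reduced matrix `L'` is again Laplace-like. Laplace-like matrices form a linear space containing
every `E_ij`, so `F` is constant along each line `M + t E_ij` in it. Since every Laplace-like `L`
equals `½ Σ_{i,j} L_ij E_ij`, walking from `0` to `L` along such lines gives `F L = 0`.
-/

theorem apply_sum_smul_eq_apply_zero {R E α ι : Type*} [Semiring R] [AddCommMonoid E]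
    [Module R E] (P : Submodule R E) (f : E → α) (v : ι → E) (hv : ∀ i, v i ∈ P)
    (hf : ∀ M ∈ P, ∀ i, ∀ c : R, f (M + c • v i) = f M) (s : Finset ι) (c : ι → R) :
    f (∑ i ∈ s, c i • v i) = f 0 := by
  classical
  induction s using Finset.induction_on with
  | empty => rw [Finset.sum_empty]
  | insert i s hi ih =>
    rw [Finset.sum_insert hi, add_comm,
      hf _ (P.sum_mem fun j _ => P.smul_mem (c j) (hv j)), ih]

theorem apply_add_smul_eq_of_deriv_eq_zero {𝕜 E G : Type*} [RCLike 𝕜] [AddCommMonoid E]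
    [Module 𝕜 E] [NormedAddCommGroup G] [NormedSpace 𝕜 G] (P : Submodule 𝕜 E) (f : E → G)
    {v : E} (hv : v ∈ P) (hdiff : ∀ M, Differentiable 𝕜 fun t : 𝕜 => f (M + t • v))
    (hderiv : ∀ M ∈ P, deriv (fun t : 𝕜 => f (M + t • v)) 0 = 0)
    {M : E} (hM : M ∈ P) (c : 𝕜) : f (M + c • v) = f M := by
  have hshift : ∀ s : 𝕜, deriv (fun t : 𝕜 => f (M + t • v)) s = 0 := by
    intro s
    have hline : (fun t : 𝕜 => f (M + (t + s) • v)) = fun t => f ((M + s • v) + t • v) := by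
      funext t; rw [add_smul, add_comm (t • v), add_assoc]
    rw [← zero_add s, ← deriv_comp_add_const, hline]
    exact hderiv _ (P.add_mem hM (P.smul_mem s hv))
  simpa using is_const_of_deriv_eq_zero (hdiff M) hshift c 0

def laplaceLike (n : ℕ) : Submodule ℝ (Matrix (Fin n) (Fin n) ℝ) where
  carrier := {M | M.IsSymm ∧ ∀ a, ∑ b, M a b = 0}
  add_mem' := fun ⟨hAs, hAr⟩ ⟨hBs, hBr⟩ =>
    ⟨hAs.add hBs, fun a => by simp only [Matrix.add_apply, Finset.sum_add_distrib, hAr, hBr,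
      add_zero]⟩
  zero_mem' := ⟨Matrix.isSymm_zero, fun _ => by simp⟩
  smul_mem' := fun c _ ⟨hs, hr⟩ =>
    ⟨hs.smul c, fun a => by simp only [Matrix.smul_apply, smul_eq_mul, ← Finset.mul_sum, hr,
      mul_zero]⟩

theorem tangentE_comm {n : ℕ} (i j : Fin n) : tangentE i j = tangentE j i := by
  ext a b
  simp only [tangentE, Matrix.of_apply]
  ring

theorem tangentE_self {n : ℕ} (i : Fin n) : tangentE i i = 0 := by
  ext a b
  simp [tangentE]

theorem tangentE_mem_laplaceLike {n : ℕ} (i j : Fin n) : tangentE i j ∈ laplaceLike n := by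
  refine ⟨?_, fun a => ?_⟩
  · ext a b
    simp only [Matrix.transpose_apply, tangentE, Matrix.of_apply, and_comm (a := b = _)]
    ring
  · simp only [tangentE, Matrix.of_apply, Finset.sum_sub_distrib, Finset.sum_add_distrib,
      ite_and]
    split_ifs <;> simp_all

theorem sum_half_smul_tangentE {n : ℕ} {L : Matrix (Fin n) (Fin n) ℝ}
    (hL : L ∈ laplaceLike n) : ∑ p : Fin n × Fin n, (L p.1 p.2 / 2) • tangentE p.1 p.2 = L := by
  ext a b
  simp only [Matrix.sum_apply, Matrix.smul_apply, smul_eq_mul, tangentE, Matrix.of_apply,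
    mul_add, mul_sub, Finset.sum_add_distrib, Finset.sum_sub_distrib, Fintype.sum_prod_type,
    ite_and, mul_ite, mul_one, mul_zero, Finset.sum_ite_irrel, Finset.sum_ite_eq,
    Finset.mem_univ, if_true, hL.1.apply, Finset.sum_const_zero, ← Finset.sum_div, hL.2,
    zero_div, ite_self, sub_zero, add_halves]

theorem apply_add_smul_tangentE_eq {n : ℕ} {α : Type*} (f : Matrix (Fin n) (Fin n) ℝ → α)
    (hf : ∀ i j, i < j → ∀ M ∈ laplaceLike n, ∀ c : ℝ, f (M + c • tangentE i j) = f M)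
    {M : Matrix (Fin n) (Fin n) ℝ} (hM : M ∈ laplaceLike n) (i j : Fin n) (c : ℝ) :
    f (M + c • tangentE i j) = f M := by
  rcases lt_trichotomy i j with h | rfl | h
  · exact hf i j h M hM c
  · rw [tangentE_self, smul_zero, add_zero]
  · rw [tangentE_comm]
    exact hf j i h M hM c

theorem isSymm_addRowCol {n : ℕ} {L : Matrix (Fin n) (Fin n) ℝ} (hL : L.IsSymm) (i j : Fin n) :
    (addRowCol L i j).IsSymm := by
  ext a b
  simp only [Matrix.transpose_apply, addRowCol, Matrix.of_apply, hL.apply]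
  by_cases ha : a = i <;> by_cases hb : b = i <;> simp [ha, hb]

theorem sum_addRowCol_eq_apply {n : ℕ} {L : Matrix (Fin n) (Fin n) ℝ}
    (hL : ∀ a, ∑ b, L a b = 0) {i j : Fin n} (hij : i ≠ j) (a : Fin n) :
    ∑ b, addRowCol L i j a b = addRowCol L i j a j := by
  simp only [addRowCol, Matrix.of_apply, Finset.sum_add_distrib, hL, Finset.sum_ite_eq',
    Finset.mem_univ, if_true, hij.symm]
  split_ifs <;> simp_all

theorem addRowCol_submatrix_mem_laplaceLike {n : ℕ} {L : Matrix (Fin (n + 1)) (Fin (n + 1)) ℝ}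
    (hL : L ∈ laplaceLike (n + 1)) {i j : Fin (n + 1)} (hij : i ≠ j) :
    (addRowCol L i j).submatrix j.succAbove j.succAbove ∈ laplaceLike n := by
  refine ⟨(isSymm_addRowCol hL.1 i j).submatrix _, fun a => ?_⟩
  have := sum_addRowCol_eq_apply hL.2 hij (j.succAbove a)
  rw [Fin.sum_univ_succAbove _ j] at this
  simpa using this

theorem differentiable_treeSum_add_smul {n : ℕ} (L E : Matrix (Fin n) (Fin n) ℝ) :
    Differentiable ℝ fun t : ℝ => treeSum (L + t • E) := by
  simp only [treeSum, amplitude, Matrix.add_apply, Matrix.smul_apply, smul_eq_mul]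
  fun_prop

theorem differentiable_cofactor_add_smul {n : ℕ} (L E : Matrix (Fin (n + 1)) (Fin (n + 1)) ℝ)
    (i j : Fin (n + 1)) : Differentiable ℝ fun t : ℝ => cofactor (L + t • E) i j := by
  unfold cofactor
  simp only [Matrix.det_apply', Matrix.submatrix_apply, Matrix.add_apply, Matrix.smul_apply,
    smul_eq_mul]
  fun_prop

theorem treeSum_zero {n : ℕ} : treeSum (0 : Matrix (Fin (n + 2)) (Fin (n + 2)) ℝ) = 0 := by
  refine Finset.sum_eq_zero fun τ hτ => ?_
  obtain ⟨u, v, huv⟩ : ∃ u v, τ.Adj u v := by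
    obtain ⟨w⟩ := (Finset.mem_filter.mp hτ).2.connected.preconnected 0 1
    cases w with
    | cons h _ => exact ⟨_, _, h⟩
  rcases lt_or_gt_of_ne huv.ne with h | h
  · exact Finset.prod_eq_zero (i := (u, v)) (by simp [h, huv]) rfl
  · exact Finset.prod_eq_zero (i := (v, u)) (by simp [h, huv.symm]) rfl

theorem cofactor_zero {n : ℕ} (i j : Fin (n + 2)) :
    cofactor (0 : Matrix (Fin (n + 2)) (Fin (n + 2)) ℝ) i j = 0 := by
  simp [cofactor]

/-- base case and inductive step of the paper's proof: for Laplace-like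
matrices of size `n + 2 ≥ 2` we have `C(0) = 0` and `T(0) = 0`; moreover, if the
identity `(-1)^{m+1} T = C` holds for `(n+1) × (n+1)` Laplace-like matrices, and the
directional derivative identities `v_{ij}(T(L)) = T(L')` and `v_{ij}(C(L)) = -C(L')`
hold for all `i < j` and all Laplace-like `L`, then `(-1)^{m+1} T = C` holds for
`(n+2) × (n+2)` Laplace-like matrices. -/
theorem induction_step (n : ℕ)
    (IH : ∀ K : Matrix (Fin (n + 1)) (Fin (n + 1)) ℝ, K.IsSymm →
      (∀ a, ∑ b, K a b = 0) →
      (-1 : ℝ) ^ ((n + 1) + 1) * treeSum K = cofactor K 0 0)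
    (hT : ∀ L : Matrix (Fin (n + 2)) (Fin (n + 2)) ℝ, L.IsSymm →
      (∀ a, ∑ b, L a b = 0) → ∀ i j : Fin (n + 2), i < j →
        deriv (fun t : ℝ => treeSum (L + t • tangentE i j)) 0 =
          treeSum ((addRowCol L i j).submatrix j.succAbove j.succAbove))
    (hC : ∀ L : Matrix (Fin (n + 2)) (Fin (n + 2)) ℝ, L.IsSymm →
      (∀ a, ∑ b, L a b = 0) → ∀ i j : Fin (n + 2), i < j →
        deriv (fun t : ℝ => cofactor (L + t • tangentE i j) 0 0) 0 =
          -cofactor ((addRowCol L i j).submatrix j.succAbove j.succAbove) 0 0) :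
    treeSum (0 : Matrix (Fin (n + 2)) (Fin (n + 2)) ℝ) = 0 ∧
    cofactor (0 : Matrix (Fin (n + 2)) (Fin (n + 2)) ℝ) 0 0 = 0 ∧
    ∀ L : Matrix (Fin (n + 2)) (Fin (n + 2)) ℝ, L.IsSymm →
      (∀ a, ∑ b, L a b = 0) →
      (-1 : ℝ) ^ ((n + 2) + 1) * treeSum L = cofactor L 0 0 := by
  refine ⟨treeSum_zero, cofactor_zero 0 0, fun L hLs hLr => ?_⟩
  set F : Matrix (Fin (n + 2)) (Fin (n + 2)) ℝ → ℝ :=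
    fun M => (-1 : ℝ) ^ ((n + 2) + 1) * treeSum M - cofactor M 0 0 with hF
  have hdiffT := differentiable_treeSum_add_smul (n := n + 2)
  have hdiffC := differentiable_cofactor_add_smul (n := n + 1)
  have hderiv : ∀ M ∈ laplaceLike (n + 2), ∀ i j, i < j →
      deriv (fun t : ℝ => F (M + t • tangentE i j)) 0 = 0 := by
    intro M hM i j hij
    have hK := addRowCol_submatrix_mem_laplaceLike hM hij.ne
    rw [deriv_fun_sub ((hdiffT M _ 0).const_mul _) (hdiffC M _ 0 0 0),
      deriv_const_mul _ (hdiffT M _ 0), hT M hM.1 hM.2 i j hij, hC M hM.1 hM.2 i j hij,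
      ← IH _ hK.1 hK.2]
    ring
  have hinv : ∀ i j, i < j → ∀ M ∈ laplaceLike (n + 2), ∀ c : ℝ,
      F (M + c • tangentE i j) = F M := fun i j hij M hM =>
    apply_add_smul_eq_of_deriv_eq_zero _ F (tangentE_mem_laplaceLike i j)
      (fun M => ((hdiffT M _).const_mul _).sub (hdiffC M _ 0 0))
      (fun M hM => hderiv M hM i j hij) hM
  have hFL := apply_sum_smul_eq_apply_zero (laplaceLike (n + 2)) F
    (fun p : Fin (n + 2) × Fin (n + 2) => tangentE p.1 p.2)
    (fun p => tangentE_mem_laplaceLike p.1 p.2)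
    (fun M hM p => apply_add_smul_tangentE_eq F hinv hM p.1 p.2) Finset.univ
    (fun p => L p.1 p.2 / 2)
  rw [sum_half_smul_tangentE ⟨hLs, hLr⟩] at hFL
  simp only [hF, treeSum_zero, cofactor_zero, mul_zero, sub_zero] at hFL
  linarith
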